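/- arXiv:2112.03475 — 7 statements merged into one kernel-verified Lean document; each statement's English description precedes it below -/
import Mathlib

section
/- Let H : ℝ² → ℝ be continuously differentiable (C¹) and let X_H : ℝ² → ℝ² be its Hamiltonian vector field, X_H(p) = (−∂H/∂x₂(p), ∂H/∂x₁(p)). Let I ⊆ ℝ be an open interval, t₀ ∈ I, and let γ₁, γ₂ : I → ℝ² be curves such that for every t ∈ I, γᵢ has derivative X_H(γᵢ(t)) at t (i = 1, 2), and γ₁(t₀) = γ₂(t₀) = p. If X_H(p) ≠ 0 (equivalently, the gradient of H at p is nonzero), then there exists δ > 0 such that γ₁(t) = γ₂(t) for all t ∈ I with |t − t₀| < δ. (Solutions of the ODE generated by a continuous Hamiltonian vector field through a non-singular point are locally unique, even though X_H is in general only continuous.) -/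
/-- The Hamiltonian vector field of a function `H : ℝ × ℝ → ℝ`:
`X_H(p) = (−∂H/∂x₂(p), ∂H/∂x₁(p))`. -/
noncomputable def hamVF (H : ℝ × ℝ → ℝ) (p : ℝ × ℝ) : ℝ × ℝ :=
  (-(fderiv ℝ H p (0, 1)), fderiv ℝ H p (1, 0))

open Set

lemma hasDerivAt_sliceY (H : ℝ × ℝ → ℝ) (hH : ContDiff ℝ 1 H) (x v : ℝ) :
    HasDerivAt (fun w => H (x, w)) (fderiv ℝ H (x, v) (0, 1)) v := by
  have h1 : HasDerivAt (fun w => ((x, w) : ℝ × ℝ)) (0, 1) v :=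
    (hasDerivAt_const v x).prodMk (hasDerivAt_id v)
  exact ((hH.differentiable one_ne_zero (x, v)).hasFDerivAt).comp_hasDerivAt v h1

lemma const_of_zero_deriv {f : ℝ → ℝ} {a b : ℝ}
    (hf : ∀ t ∈ Set.Ioo a b, HasDerivAt f 0 t)
    {s t : ℝ} (hs : s ∈ Set.Ioo a b) (ht : t ∈ Set.Ioo a b) : f s = f t := by
  have hdiff : DifferentiableOn ℝ f (Set.Ioo a b) := fun x hx =>
    (hf x hx).differentiableAt.differentiableWithinAt
  refine (convex_Ioo a b).is_const_of_fderivWithin_eq_zero hdiff (fun x hx => ?_) hs ht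
  rw [fderivWithin_of_isOpen isOpen_Ioo hx, (hf x hx).hasFDerivAt.fderiv]
  ext; simp

lemma fderiv_apply_hamVF (H : ℝ × ℝ → ℝ) (q : ℝ × ℝ) :
    fderiv ℝ H q (hamVF H q) = 0 := by
  have h : hamVF H q = (-(fderiv ℝ H q (0,1))) • ((1:ℝ),(0:ℝ))
      + (fderiv ℝ H q (1,0)) • ((0:ℝ),(1:ℝ)) := by
    simp [hamVF, Prod.ext_iff]
  rw [h, map_add, map_smul, map_smul]
  simp only [smul_eq_mul]
  ring

lemma energy_deriv (H : ℝ × ℝ → ℝ) (hH : ContDiff ℝ 1 H) {γ : ℝ → ℝ × ℝ} {t : ℝ}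
    (hγ : HasDerivAt γ (hamVF H (γ t)) t) :
    HasDerivAt (fun s => H (γ s)) 0 t := by
  have := ((hH.differentiable one_ne_zero (γ t)).hasFDerivAt).comp_hasDerivAt t hγ
  rwa [fderiv_apply_hamVF] at this

lemma hasDerivAt_fst_comp {γ : ℝ → ℝ × ℝ} {d : ℝ × ℝ} {t : ℝ} (h : HasDerivAt γ d t) :
    HasDerivAt (fun s => (γ s).1) d.1 t :=
  ((ContinuousLinearMap.fst ℝ ℝ ℝ).hasFDerivAt).comp_hasDerivAt t h

lemma core (H : ℝ × ℝ → ℝ) (hH : ContDiff ℝ 1 H)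
    (a b t₀ : ℝ) (ht₀ : t₀ ∈ Set.Ioo a b)
    (γ₁ γ₂ : ℝ → ℝ × ℝ)
    (h₁ : ∀ t ∈ Set.Ioo a b, HasDerivAt γ₁ (hamVF H (γ₁ t)) t)
    (h₂ : ∀ t ∈ Set.Ioo a b, HasDerivAt γ₂ (hamVF H (γ₂ t)) t)
    (p : ℝ × ℝ) (hγ₁ : γ₁ t₀ = p) (hγ₂ : γ₂ t₀ = p)
    (hd2 : 0 < fderiv ℝ H p (0, 1)) :
    ∃ δ > 0, ∀ t ∈ Set.Ioo a b, |t - t₀| < δ → γ₁ t = γ₂ t := by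
  classical
  set d2 : ℝ × ℝ → ℝ := fun q => fderiv ℝ H q (0, 1) with hd2def
  have hd2c : Continuous d2 := (hH.continuous_fderiv one_ne_zero).clm_apply continuous_const
  set m := d2 p / 2 with hmdef
  have hm0 : 0 < m := half_pos hd2
  -- radius r on which d2 > m
  obtain ⟨ε, hε0, hεsub⟩ := Metric.isOpen_iff.1 (isOpen_lt continuous_const hd2c) p
    (by simp only [mem_setOf_eq]; linarith)
  set r := ε / 2 with hrdef
  have hr0 : 0 < r := half_pos hε0
  have hball : ∀ q : ℝ × ℝ, |q.1 - p.1| ≤ r → |q.2 - p.2| ≤ r → m < d2 q := by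
    intro q hq1 hq2
    have : dist q p < ε := by
      rw [Prod.dist_eq, Real.dist_eq, Real.dist_eq]
      exact lt_of_le_of_lt (max_le hq1 hq2) (by rw [hrdef]; linarith)
    exact hεsub (Metric.mem_ball.2 this)
  -- strict monotonicity of vertical slices
  have hslice : ∀ x : ℝ, |x - p.1| ≤ r →
      StrictMonoOn (fun v => H (x, v)) (Icc (p.2 - r) (p.2 + r)) := by
    intro x hx
    apply strictMonoOn_of_deriv_pos (convex_Icc _ _)
    · exact (hH.continuous.comp (continuous_const.prodMk continuous_id)).continuousOn
    · intro v hv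
      rw [interior_Icc, mem_Ioo] at hv
      rw [(hasDerivAt_sliceY H hH x v).deriv]
      exact lt_trans hm0 (hball (x, v) hx (abs_le.2 ⟨by linarith, by linarith⟩))
  set c := H p with hcdef
  have hpeta : ((p.1, p.2) : ℝ × ℝ) = p := Prod.mk.eta
  have hp1r : |p.1 - p.1| ≤ r := by simp [hr0.le]
  have hp2Icc : p.2 ∈ Icc (p.2 - r) (p.2 + r) := ⟨by linarith, by linarith⟩
  have hlo : H (p.1, p.2 - r) < c := by
    have := hslice p.1 hp1r (left_mem_Icc.2 (by linarith)) hp2Icc (by linarith)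
    simpa [hpeta] using this
  have hhi : c < H (p.1, p.2 + r) := by
    have := hslice p.1 hp1r hp2Icc (right_mem_Icc.2 (by linarith)) (by linarith)
    simpa [hpeta] using this
  -- choose horizontal radius r'
  have hcont1 : Continuous fun x : ℝ => H (x, p.2 - r) :=
    hH.continuous.comp (continuous_id.prodMk continuous_const)
  have hcont2 : Continuous fun x : ℝ => H (x, p.2 + r) :=
    hH.continuous.comp (continuous_id.prodMk continuous_const)
  obtain ⟨ε', hε'0, hsub'⟩ := Metric.isOpen_iff.1
    ((isOpen_lt hcont1 continuous_const).inter (isOpen_lt continuous_const hcont2)) p.1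
    ⟨hlo, hhi⟩
  set r' := min (ε' / 2) r with hr'def
  have hr'0 : 0 < r' := lt_min (half_pos hε'0) hr0
  have hr'r : r' ≤ r := min_le_right _ _
  set X := Ioo (p.1 - r') (p.1 + r') with hXdef
  have hXopen : IsOpen X := isOpen_Ioo
  have hXmem : ∀ x ∈ X, |x - p.1| < r' := fun x hx =>
    abs_sub_lt_iff.2 ⟨by linarith [hx.2], by linarith [hx.1]⟩
  have hXr : ∀ x ∈ X, |x - p.1| ≤ r := fun x hx => le_trans (hXmem x hx).le hr'r
  have hXprop : ∀ x ∈ X, H (x, p.2 - r) < c ∧ c < H (x, p.2 + r) := by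
    intro x hx
    apply hsub'
    rw [Metric.mem_ball, Real.dist_eq]
    exact lt_of_lt_of_le (hXmem x hx) (le_trans (min_le_left _ _) (by linarith))
  -- implicit function g via IVT
  have hex : ∀ x : ℝ, ∃ v : ℝ, x ∈ X → v ∈ Ioo (p.2 - r) (p.2 + r) ∧ H (x, v) = c := by
    intro x
    by_cases hx : x ∈ X
    · have hcont : ContinuousOn (fun v => H (x, v)) (Icc (p.2 - r) (p.2 + r)) :=
        (hH.continuous.comp (continuous_const.prodMk continuous_id)).continuousOn
      obtain ⟨v, hv, hveq⟩ := intermediate_value_Ioo (by linarith : p.2 - r ≤ p.2 + r) hcont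
        ⟨(hXprop x hx).1, (hXprop x hx).2⟩
      exact ⟨v, fun _ => ⟨hv, hveq⟩⟩
    · exact ⟨0, fun h => absurd h hx⟩
  choose g hg using hex
  have huniq : ∀ x ∈ X, ∀ v ∈ Icc (p.2 - r) (p.2 + r), H (x, v) = c → v = g x := by
    intro x hx v hv hveq
    exact (hslice x (hXr x hx)).injOn hv (Ioo_subset_Icc_self (hg x hx).1)
      (by rw [hveq, (hg x hx).2])
  -- continuity of g
  have hgc : ∀ x₀ ∈ X, ContinuousAt g x₀ := by
    intro x₀ hx₀
    rw [Metric.continuousAt_iff]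
    intro ε₀ hε₀
    obtain ⟨hgIoo, hgeq⟩ := hg x₀ hx₀
    set ε₁ := min (ε₀ / 2) (min (g x₀ - (p.2 - r)) (p.2 + r - g x₀)) with hε₁def
    have hε₁0 : 0 < ε₁ := lt_min (half_pos hε₀)
      (lt_min (by linarith [hgIoo.1]) (by linarith [hgIoo.2]))
    have h1 : ε₁ ≤ g x₀ - (p.2 - r) := (min_le_right _ _).trans (min_le_left _ _)
    have h2 : ε₁ ≤ p.2 + r - g x₀ := (min_le_right _ _).trans (min_le_right _ _)
    have hloI : g x₀ - ε₁ ∈ Icc (p.2 - r) (p.2 + r) := ⟨by linarith, by linarith⟩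
    have hhiI : g x₀ + ε₁ ∈ Icc (p.2 - r) (p.2 + r) := ⟨by linarith, by linarith⟩
    have hgI : g x₀ ∈ Icc (p.2 - r) (p.2 + r) := Ioo_subset_Icc_self hgIoo
    have hmx₀ := hslice x₀ (hXr x₀ hx₀)
    have hHlo : H (x₀, g x₀ - ε₁) < c := by
      have := hmx₀ hloI hgI (by linarith); simpa [hgeq] using this
    have hHhi : c < H (x₀, g x₀ + ε₁) := by
      have := hmx₀ hgI hhiI (by linarith); simpa [hgeq] using this
    have hc1 : Continuous fun x : ℝ => H (x, g x₀ - ε₁) :=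
      hH.continuous.comp (continuous_id.prodMk continuous_const)
    have hc2 : Continuous fun x : ℝ => H (x, g x₀ + ε₁) :=
      hH.continuous.comp (continuous_id.prodMk continuous_const)
    obtain ⟨δ₁, hδ₁0, hδsub⟩ := Metric.isOpen_iff.1
      (((isOpen_lt hc1 continuous_const).inter (isOpen_lt continuous_const hc2)).inter hXopen)
      x₀ ⟨⟨hHlo, hHhi⟩, hx₀⟩
    refine ⟨δ₁, hδ₁0, fun {x} hx => ?_⟩
    obtain ⟨⟨hl, hh⟩, hxX⟩ := hδsub (Metric.mem_ball.2 hx)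
    obtain ⟨hgxIoo, hgxeq⟩ := hg x hxX
    have hmx := hslice x (hXr x hxX)
    have hgxI : g x ∈ Icc (p.2 - r) (p.2 + r) := Ioo_subset_Icc_self hgxIoo
    have h5 : g x₀ - ε₁ < g x :=
      (hmx.lt_iff_lt hloI hgxI).1 (by rw [hgxeq]; exact hl)
    have h6 : g x < g x₀ + ε₁ :=
      (hmx.lt_iff_lt hgxI hhiI).1 (by rw [hgxeq]; exact hh)
    rw [Real.dist_eq]
    have h7 : |g x - g x₀| < ε₁ := abs_sub_lt_iff.2 ⟨by linarith, by linarith⟩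
    have h8 : ε₁ ≤ ε₀ / 2 := min_le_left _ _
    linarith
  -- φ and ψ
  set φ : ℝ → ℝ := fun x => d2 (x, g x) with hφdef
  have hφpos : ∀ x ∈ X, m < φ x := fun x hx =>
    hball (x, g x) (hXr x hx)
      (abs_le.2 ⟨by linarith [(hg x hx).1.1], by linarith [(hg x hx).1.2]⟩)
  have hφc : ∀ x ∈ X, ContinuousAt φ x := fun x hx =>
    (hd2c.continuousAt).comp (continuousAt_id.prodMk (hgc x hx))
  set ψ : ℝ → ℝ := fun x => -(φ x)⁻¹ with hψdef
  have hψc : ∀ x ∈ X, ContinuousAt ψ x := fun x hx =>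
    ((hφc x hx).inv₀ (ne_of_gt (lt_trans hm0 (hφpos x hx)))).neg
  have hψneg : ∀ x ∈ X, ψ x < 0 := fun x hx =>
    neg_lt_zero.2 (inv_pos.2 (lt_trans hm0 (hφpos x hx)))
  have hψcont : ContinuousOn ψ X := fun x hx => (hψc x hx).continuousWithinAt
  set F : ℝ → ℝ := fun x => ∫ s in p.1..x, ψ s with hFdef
  have hp1X : p.1 ∈ X := ⟨by linarith, by linarith⟩
  have hFd : ∀ x ∈ X, HasDerivAt F (ψ x) x := by
    intro x hx
    apply intervalIntegral.integral_hasDerivAt_right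
    · exact (hψcont.mono ((Set.ordConnected_Ioo).uIcc_subset hp1X hx)).intervalIntegrable
    · exact hψcont.stronglyMeasurableAtFilter hXopen x hx
    · exact hψc x hx
  have hFanti : StrictAntiOn F X := by
    apply strictAntiOn_of_deriv_neg (convex_Ioo _ _)
    · exact fun x hx => (hFd x hx).continuousAt.continuousWithinAt
    · intro x hx
      rw [hXopen.interior_eq] at hx
      rw [(hFd x hx).deriv]
      exact hψneg x hx
  -- energy conservation
  have hcons : ∀ (γ : ℝ → ℝ × ℝ), (∀ t ∈ Ioo a b, HasDerivAt γ (hamVF H (γ t)) t) →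
      γ t₀ = p → ∀ t ∈ Ioo a b, H (γ t) = c := by
    intro γ hγd hγ0 t ht
    have := const_of_zero_deriv (f := fun s => H (γ s))
      (fun s hs => energy_deriv H hH (hγd s hs)) ht ht₀
    rw [hcdef]; simpa [hγ0] using this
  -- choose δ
  have e1 : ∀ᶠ t in nhds t₀, t ∈ Ioo a b := isOpen_Ioo.mem_nhds ht₀
  have e2 : ∀ᶠ t in nhds t₀, γ₁ t ∈ Metric.ball p r' := by
    apply (h₁ t₀ ht₀).continuousAt
    rw [hγ₁]; exact Metric.ball_mem_nhds p hr'0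
  have e3 : ∀ᶠ t in nhds t₀, γ₂ t ∈ Metric.ball p r' := by
    apply (h₂ t₀ ht₀).continuousAt
    rw [hγ₂]; exact Metric.ball_mem_nhds p hr'0
  obtain ⟨δ, hδ0, hδ⟩ := Metric.eventually_nhds_iff.1 (e1.and (e2.and e3))
  -- main per-curve computation
  have main : ∀ (γ : ℝ → ℝ × ℝ), (∀ s ∈ Ioo a b, HasDerivAt γ (hamVF H (γ s)) s) →
      γ t₀ = p → (∀ s, dist s t₀ < δ → s ∈ Ioo a b ∧ γ s ∈ Metric.ball p r') →
      ∀ s, dist s t₀ < δ →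
        (γ s).1 ∈ X ∧ γ s = ((γ s).1, g ((γ s).1)) ∧ F ((γ s).1) = (s - t₀) + F p.1 := by
    intro γ hγd hγ0 hγin
    have hmem : ∀ s, dist s t₀ < δ → (γ s).1 ∈ X ∧ γ s = ((γ s).1, g ((γ s).1)) := by
      intro s hs
      obtain ⟨hsab, hsball⟩ := hγin s hs
      have hd : dist (γ s) p < r' := Metric.mem_ball.1 hsball
      have hfst : dist (γ s).1 p.1 ≤ dist (γ s) p := by
        rw [Prod.dist_eq]; exact le_max_left _ _
      have hsnd : dist (γ s).2 p.2 ≤ dist (γ s) p := by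
        rw [Prod.dist_eq]; exact le_max_right _ _
      have h1 : |(γ s).1 - p.1| < r' := by
        rw [← Real.dist_eq]; exact lt_of_le_of_lt hfst hd
      have h2 : |(γ s).2 - p.2| ≤ r := by
        rw [← Real.dist_eq]; exact le_trans hsnd (le_trans hd.le hr'r)
      have hX1 : (γ s).1 ∈ X := by
        rw [hXdef, mem_Ioo]
        rw [abs_sub_lt_iff] at h1
        constructor <;> linarith [h1.1, h1.2]
      have hHs : H (γ s) = c := hcons γ hγd hγ0 s hsab
      have h2' := abs_le.1 h2
      have h3 := huniq ((γ s).1) hX1 ((γ s).2) ⟨by linarith [h2'.1], by linarith [h2'.2]⟩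
        (by rw [Prod.mk.eta]; exact hHs)
      refine ⟨hX1, ?_⟩
      rw [← h3, Prod.mk.eta]
    have hGd : ∀ s, dist s t₀ < δ → HasDerivAt (fun τ => F ((γ τ).1) - (τ - t₀)) 0 s := by
      intro s hs
      obtain ⟨hX1, heq⟩ := hmem s hs
      have hu : HasDerivAt (fun τ => (γ τ).1) (-(d2 (γ s))) s :=
        hasDerivAt_fst_comp (hγd s (hγin s hs).1)
      have hd2eq : d2 (γ s) = φ ((γ s).1) := by
        conv_lhs => rw [heq]
      have hcomp := (hFd _ hX1).comp s hu
      have hval : ψ ((γ s).1) * (-(d2 (γ s))) = 1 := by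
        rw [hd2eq, hψdef]
        have hpos : (0:ℝ) < φ ((γ s).1) := lt_trans hm0 (hφpos _ hX1)
        field_simp
      rw [hval] at hcomp
      have := hcomp.sub ((hasDerivAt_id s).sub_const t₀)
      simpa [Function.comp_def, Pi.sub_def] using this
    intro s hs
    obtain ⟨hX1, heq⟩ := hmem s hs
    refine ⟨hX1, heq, ?_⟩
    have ht₀J : t₀ ∈ Ioo (t₀ - δ) (t₀ + δ) := ⟨by linarith, by linarith⟩
    have hsJ : s ∈ Ioo (t₀ - δ) (t₀ + δ) := by
      rw [Real.dist_eq, abs_sub_lt_iff] at hs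
      exact ⟨by linarith [hs.2], by linarith [hs.1]⟩
    have hconstG := const_of_zero_deriv (f := fun τ => F ((γ τ).1) - (τ - t₀))
      (fun τ hτ => hGd τ (by
        rw [Real.dist_eq]
        exact abs_sub_lt_iff.2 ⟨by linarith [hτ.2], by linarith [hτ.1]⟩)) hsJ ht₀J
    simp only [hγ0, sub_self, sub_zero] at hconstG
    linarith [hconstG]
  refine ⟨δ, hδ0, fun t htab hdist => ?_⟩
  have hdist' : dist t t₀ < δ := by rwa [Real.dist_eq]
  have H1 := main γ₁ h₁ hγ₁ (fun s hs => ⟨(hδ hs).1, (hδ hs).2.1⟩) t hdist'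
  have H2 := main γ₂ h₂ hγ₂ (fun s hs => ⟨(hδ hs).1, (hδ hs).2.2⟩) t hdist'
  have huu : (γ₁ t).1 = (γ₂ t).1 :=
    hFanti.injOn H1.1 H2.1 (by rw [H1.2.2, H2.2.2])
  rw [H1.2.1, H2.2.1, huu]

lemma hasDerivAt_snd_comp {γ : ℝ → ℝ × ℝ} {d : ℝ × ℝ} {t : ℝ} (h : HasDerivAt γ d t) :
    HasDerivAt (fun s => (γ s).2) d.2 t :=
  ((ContinuousLinearMap.snd ℝ ℝ ℝ).hasFDerivAt).comp_hasDerivAt t h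

lemma hamVF_neg (H : ℝ × ℝ → ℝ) (hH : ContDiff ℝ 1 H) (q : ℝ × ℝ) :
    hamVF (fun q => -H q) q = -hamVF H q := by
  have hK : HasFDerivAt (fun q => -H q) (-(fderiv ℝ H q)) q :=
    ((hH.differentiable one_ne_zero q).hasFDerivAt).neg
  rw [hamVF, hamVF, hK.fderiv]
  simp [Prod.ext_iff]

lemma hasFDerivAt_negswap (H : ℝ × ℝ → ℝ) (hH : ContDiff ℝ 1 H) (q : ℝ × ℝ) :
    HasFDerivAt (fun q : ℝ × ℝ => -H (q.2, q.1))
      (-((fderiv ℝ H (q.2, q.1)).comp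
        ((ContinuousLinearEquiv.prodComm ℝ ℝ ℝ : (ℝ × ℝ) ≃L[ℝ] ℝ × ℝ) :
          (ℝ × ℝ) →L[ℝ] ℝ × ℝ))) q := by
  have hsw : HasFDerivAt (fun q : ℝ × ℝ => ((q.2, q.1) : ℝ × ℝ))
      ((ContinuousLinearEquiv.prodComm ℝ ℝ ℝ : (ℝ × ℝ) ≃L[ℝ] ℝ × ℝ) :
        (ℝ × ℝ) →L[ℝ] ℝ × ℝ) q :=
    (ContinuousLinearEquiv.prodComm ℝ ℝ ℝ).hasFDerivAt
  exact (((hH.differentiable one_ne_zero (q.2, q.1)).hasFDerivAt).comp q hsw).neg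

lemma fderiv_negswap_apply (H : ℝ × ℝ → ℝ) (hH : ContDiff ℝ 1 H) (q v : ℝ × ℝ) :
    fderiv ℝ (fun q : ℝ × ℝ => -H (q.2, q.1)) q v = -(fderiv ℝ H (q.2, q.1) (v.2, v.1)) := by
  rw [(hasFDerivAt_negswap H hH q).fderiv]
  simp [Prod.swap]

lemma hamVF_negswap (H : ℝ × ℝ → ℝ) (hH : ContDiff ℝ 1 H) (q : ℝ × ℝ) :
    hamVF (fun q : ℝ × ℝ => -H (q.2, q.1)) q = Prod.swap (hamVF H (q.2, q.1)) := by
  simp only [hamVF, Prod.swap]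
  rw [fderiv_negswap_apply H hH q (0, 1), fderiv_negswap_apply H hH q (1, 0)]
  simp

lemma key (H : ℝ × ℝ → ℝ) (hH : ContDiff ℝ 1 H)
    (a b t₀ : ℝ) (ht₀ : t₀ ∈ Set.Ioo a b)
    (γ₁ γ₂ : ℝ → ℝ × ℝ)
    (h₁ : ∀ t ∈ Set.Ioo a b, HasDerivAt γ₁ (hamVF H (γ₁ t)) t)
    (h₂ : ∀ t ∈ Set.Ioo a b, HasDerivAt γ₂ (hamVF H (γ₂ t)) t)
    (p : ℝ × ℝ) (hγ₁ : γ₁ t₀ = p) (hγ₂ : γ₂ t₀ = p)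
    (hd2 : fderiv ℝ H p (0, 1) ≠ 0) :
    ∃ δ > 0, ∀ t ∈ Set.Ioo a b, |t - t₀| < δ → γ₁ t = γ₂ t := by
  rcases hd2.lt_or_gt with hneg | hpos
  · -- time reversal: apply core to -H and t ↦ γ (2t₀ - t)
    have hKc : ContDiff ℝ 1 (fun q => -H q) := hH.neg
    have hη : ∀ (γ : ℝ → ℝ × ℝ), (∀ t ∈ Ioo a b, HasDerivAt γ (hamVF H (γ t)) t) →
        ∀ t ∈ Ioo (2*t₀ - b) (2*t₀ - a),
          HasDerivAt (fun t => γ (2*t₀ - t)) (hamVF (fun q => -H q) (γ (2*t₀ - t))) t := by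
      intro γ hγ t ht
      have hab : 2*t₀ - t ∈ Ioo a b := ⟨by linarith [ht.2], by linarith [ht.1]⟩
      have hσ : HasDerivAt (fun t : ℝ => 2*t₀ - t) (-1) t := by
        simpa using (hasDerivAt_id t).const_sub (2*t₀)
      have hc := (hγ _ hab).scomp t hσ
      rw [hamVF_neg H hH]
      simpa [Function.comp_def] using hc
    have hKd2 : 0 < fderiv ℝ (fun q => -H q) p (0, 1) := by
      have hfd : fderiv ℝ (fun q => -H q) p = -(fderiv ℝ H p) :=
        (((hH.differentiable one_ne_zero p).hasFDerivAt).neg).fderiv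
      rw [hfd]
      simpa using hneg
    obtain ⟨δ, hδ0, hδ⟩ := core (fun q => -H q) hKc (2*t₀ - b) (2*t₀ - a) t₀
      ⟨by linarith [ht₀.2], by linarith [ht₀.1]⟩ _ _ (hη γ₁ h₁) (hη γ₂ h₂) p
      (by rw [show 2*t₀ - t₀ = t₀ by ring, hγ₁])
      (by rw [show 2*t₀ - t₀ = t₀ by ring, hγ₂]) hKd2
    refine ⟨δ, hδ0, fun t ht hdist => ?_⟩
    have h := hδ (2*t₀ - t) ⟨by linarith [ht.2], by linarith [ht.1]⟩
      (by rw [show 2*t₀ - t - t₀ = -(t - t₀) by ring, abs_neg]; exact hdist)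
    simpa [show 2*t₀ - (2*t₀ - t) = t by ring] using h
  · exact core H hH a b t₀ ht₀ γ₁ γ₂ h₁ h₂ p hγ₁ hγ₂ hpos

/-- Solutions of the ODE generated by a continuous Hamiltonian vector field through a
non-singular point are locally unique. -/
theorem stmt_0 (H : ℝ × ℝ → ℝ) (hH : ContDiff ℝ 1 H)
    (a b t₀ : ℝ) (ht₀ : t₀ ∈ Set.Ioo a b)
    (γ₁ γ₂ : ℝ → ℝ × ℝ)
    (h₁ : ∀ t ∈ Set.Ioo a b, HasDerivAt γ₁ (hamVF H (γ₁ t)) t)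
    (h₂ : ∀ t ∈ Set.Ioo a b, HasDerivAt γ₂ (hamVF H (γ₂ t)) t)
    (p : ℝ × ℝ) (hγ₁ : γ₁ t₀ = p) (hγ₂ : γ₂ t₀ = p)
    (hns : hamVF H p ≠ 0) :
    ∃ δ > 0, ∀ t ∈ Set.Ioo a b, |t - t₀| < δ → γ₁ t = γ₂ t := by
  by_cases hd2 : fderiv ℝ H p (0, 1) ≠ 0
  · exact key H hH a b t₀ ht₀ γ₁ γ₂ h₁ h₂ p hγ₁ hγ₂ hd2
  · push_neg at hd2
    have hd1 : fderiv ℝ H p (1, 0) ≠ 0 := by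
      intro h0
      exact hns (by rw [hamVF, hd2, h0]; simp)
    have hKc : ContDiff ℝ 1 (fun q : ℝ × ℝ => -H (q.2, q.1)) :=
      (hH.comp (contDiff_snd.prodMk contDiff_fst)).neg
    have hη : ∀ (γ : ℝ → ℝ × ℝ), (∀ t ∈ Ioo a b, HasDerivAt γ (hamVF H (γ t)) t) →
        ∀ t ∈ Ioo a b, HasDerivAt (fun t => (((γ t).2, (γ t).1) : ℝ × ℝ))
          (hamVF (fun q : ℝ × ℝ => -H (q.2, q.1)) ((γ t).2, (γ t).1)) t := by
      intro γ hγ t ht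
      rw [hamVF_negswap H hH ((γ t).2, (γ t).1)]
      exact (hasDerivAt_snd_comp (hγ t ht)).prodMk (hasDerivAt_fst_comp (hγ t ht))
    have hKd2 : fderiv ℝ (fun q : ℝ × ℝ => -H (q.2, q.1)) (p.2, p.1) (0, 1) ≠ 0 := by
      rw [fderiv_negswap_apply H hH (p.2, p.1) (0, 1)]
      simpa using hd1
    obtain ⟨δ, hδ0, hδ⟩ := key (fun q : ℝ × ℝ => -H (q.2, q.1)) hKc a b t₀ ht₀
      _ _ (hη γ₁ h₁) (hη γ₂ h₂) (p.2, p.1)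
      (by rw [hγ₁]) (by rw [hγ₂]) hKd2
    refine ⟨δ, hδ0, fun t ht hdist => ?_⟩
    have h := hδ t ht hdist
    rw [Prod.mk.injEq] at h
    exact Prod.ext_iff.2 ⟨h.2, h.1⟩
end

section
/- Let H : ℝ² → ℝ be continuously differentiable (C¹) with Hamiltonian vector field X_H(p) = (−∂H/∂x₂(p), ∂H/∂x₁(p)), and let c : I → ℝ² be a C¹ curve defined on an interval I ⊆ ℝ such that for every t ∈ I the vectors c'(t) and X_H(c(t)) are linearly independent (i.e., c is a transversal to X_H). Then the derivative of H ∘ c is nonzero at every t ∈ I; consequently H ∘ c is strictly monotone on I, and in particular any two distinct points of the transversal c have different values of the Hamiltonian H. -/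
/-- A continuous linear map on `ℝ × ℝ` applied to `v` in coordinates. -/
lemma clm_apply_eq (L : ℝ × ℝ →L[ℝ] ℝ) (v : ℝ × ℝ) :
    L v = v.1 * L (1, 0) + v.2 * L (0, 1) := by
  have hv : v.1 • ((1 : ℝ), (0 : ℝ)) + v.2 • ((0 : ℝ), (1 : ℝ)) = v := by
    ext <;> simp
  rw [← hv, map_add, map_smul, map_smul, smul_eq_mul, smul_eq_mul, hv]

/-- Along a transversal to a Hamiltonian vector field, the Hamiltonian has nonzero
derivative, is strictly monotone, and takes distinct values at distinct points. -/
theorem stmt_2 (H : ℝ × ℝ → ℝ) (hH : ContDiff ℝ 1 H)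
    (I : Set ℝ) (hI : I.OrdConnected)
    (c c' : ℝ → ℝ × ℝ)
    (hc : ∀ t ∈ I, HasDerivWithinAt c (c' t) I t)
    (hc' : ContinuousOn c' I)
    (htrans : ∀ t ∈ I, LinearIndependent ℝ ![c' t, hamVF H (c t)]) :
    (∀ t ∈ I, HasDerivWithinAt (H ∘ c) (fderiv ℝ H (c t) (c' t)) I t ∧
      fderiv ℝ H (c t) (c' t) ≠ 0) ∧
    (StrictMonoOn (H ∘ c) I ∨ StrictAntiOn (H ∘ c) I) ∧
    (∀ s ∈ I, ∀ t ∈ I, s ≠ t → H (c s) ≠ H (c t)) := by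
  have hHdiff : Differentiable ℝ H := hH.differentiable one_ne_zero
  -- Part 1: derivative exists and is nonzero
  have hderiv : ∀ t ∈ I, HasDerivWithinAt (H ∘ c) (fderiv ℝ H (c t) (c' t)) I t :=
    fun t ht => (hHdiff (c t)).hasFDerivAt.comp_hasDerivWithinAt t (hc t ht)
  have hne : ∀ t ∈ I, fderiv ℝ H (c t) (c' t) ≠ 0 := by
    intro t ht h0
    set v := c' t with hv
    set a := fderiv ℝ H (c t) ((1 : ℝ), (0 : ℝ)) with ha
    set b := fderiv ℝ H (c t) ((0 : ℝ), (1 : ℝ)) with hb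
    have hX : hamVF H (c t) = (-b, a) := rfl
    have happ : v.1 * a + v.2 * b = 0 := by
      rw [← clm_apply_eq (fderiv ℝ H (c t)) v]; exact h0
    have hli := (htrans t ht)
    rw [LinearIndependent.pair_iff] at hli
    have h1 := hli a (-v.2) (by
      rw [hX]; ext <;> simp <;> ring_nf <;> linarith [happ])
    have h2 := hli b v.1 (by
      rw [hX]; ext <;> simp <;> ring_nf <;> linarith [happ])
    have h3 := hli 1 0 (by
      rw [hX]
      have hv1 : v.1 = 0 := h2.2
      have hv2 : v.2 = 0 := by have := h1.2; linarith
      have hvz : c' t = 0 := by rw [← hv]; exact Prod.ext_iff.2 ⟨hv1, hv2⟩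
      simp [hvz])
    exact one_ne_zero h3.1
  refine ⟨fun t ht => ⟨hderiv t ht, hne t ht⟩, ?_⟩
  -- continuity of the derivative function
  set φ : ℝ → ℝ := fun t => fderiv ℝ H (c t) (c' t) with hφ
  have hcCont : ContinuousOn c I := fun t ht => (hc t ht).continuousWithinAt
  have hφCont : ContinuousOn φ I := by
    have h1 : ContinuousOn (fun t => fderiv ℝ H (c t)) I :=
      (hH.continuous_fderiv one_ne_zero).comp_continuousOn hcCont
    exact h1.clm_apply hc'
  have hHcCont : ContinuousOn (H ∘ c) I := hH.continuous.comp_continuousOn hcCont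
  have hconv : Convex ℝ I := hI.convex
  -- sign constancy of φ on I
  have hsign : (∀ t ∈ I, 0 < φ t) ∨ (∀ t ∈ I, φ t < 0) := by
    by_cases hpos : ∃ s ∈ I, 0 < φ s
    · obtain ⟨s, hs, hφs⟩ := hpos
      left
      intro t ht
      by_contra hle
      push_neg at hle
      have hlt : φ t < 0 := lt_of_le_of_ne hle (hne t ht)
      have : (0 : ℝ) ∈ Set.Icc (φ t) (φ s) := ⟨hlt.le, hφs.le⟩
      have h0mem := hI.isPreconnected.intermediate_value ht hs hφCont this
      obtain ⟨u, hu, hu0⟩ := h0mem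
      exact hne u hu hu0
    · push_neg at hpos
      right
      intro t ht
      exact lt_of_le_of_ne (hpos t ht) (hne t ht)
  have hmono : StrictMonoOn (H ∘ c) I ∨ StrictAntiOn (H ∘ c) I := by
    rcases hsign with hp | hn
    · left
      refine strictMonoOn_of_hasDerivWithinAt_pos hconv hHcCont
        (fun x hx => ((hderiv x (interior_subset hx)).mono interior_subset)) ?_
      exact fun x hx => hp x (interior_subset hx)
    · right
      refine strictAntiOn_of_hasDerivWithinAt_neg hconv hHcCont
        (fun x hx => ((hderiv x (interior_subset hx)).mono interior_subset)) ?_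
      exact fun x hx => hn x (interior_subset hx)
  refine ⟨hmono, ?_⟩
  intro s hs t ht hst
  have hinj : Set.InjOn (H ∘ c) I := by
    rcases hmono with hm | hm
    · exact hm.injOn
    · exact hm.injOn
  exact fun h => hst (hinj hs ht h)
end

section
/- Let X be a finite T₀ topological space and let x ∈ X be a down beat point, i.e., suppose there exists y ∈ X with y ≠ x such that {z ∈ X | z ∈ closure {x} and z ≠ x} = {z ∈ X | z ∈ closure {y}}. Then the subspace X \ {x} (with the subspace topology) is a deformation retract of X: there is a continuous retraction r : X → X \ {x} with r restricted to X \ {x} equal to the identity and with the composite of r with the inclusion ι : X \ {x} → X homotopic to the identity of X. In particular, the inclusion ι is a homotopy equivalence. -/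
open scoped Topology

/-- Removing a down beat point from a finite T₀ space yields a deformation retract;
in particular the inclusion is a homotopy equivalence. -/
theorem stmt_4 (X : Type*) [TopologicalSpace X] [Finite X] [T0Space X]
    (x y : X) (hyx : y ≠ x)
    (hbeat : {z : X | z ∈ closure {x} ∧ z ≠ x} = {z : X | z ∈ closure {y}}) :
    ∃ r : C(X, {z : X // z ≠ x}),
      (∀ z : {z : X // z ≠ x}, r z = z) ∧
      (ContinuousMap.Homotopic
        ((⟨Subtype.val, continuous_subtype_val⟩ : C({z : X // z ≠ x}, X)).comp r)
        (ContinuousMap.id X)) := by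
  classical
  have hyc : y ∈ closure ({x} : Set X) := by
    have hy : y ∈ {z : X | z ∈ closure {y}} := subset_closure rfl
    rw [← hbeat] at hy
    exact hy.1
  -- every open set containing y contains x
  have hkey : ∀ U : Set X, IsOpen U → y ∈ U → x ∈ U := by
    intro U hU hyU
    rcases mem_closure_iff.mp hyc U hU hyU with ⟨w, hwU, hw⟩
    rwa [Set.mem_singleton_iff.mp hw] at hwU
  -- if U is open and y ∉ U then U \ {x} is open
  have hUminus : ∀ U : Set X, IsOpen U → y ∉ U → IsOpen (U \ {x}) := by
    intro U hU hyU
    rw [isOpen_iff_forall_specializes]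
    rintro a b hab ⟨hbU, hbx⟩
    refine ⟨isOpen_iff_forall_specializes.mp hU a b hab hbU, ?_⟩
    intro hax
    rw [Set.mem_singleton_iff] at hax
    have hb : b ∈ closure ({x} : Set X) := by
      rw [← hax]; exact specializes_iff_mem_closure.mp hab
    have hb2 : b ∈ {z : X | z ∈ closure {y}} := by
      rw [← hbeat]; exact ⟨hb, fun h => hbx (by simp [h])⟩
    rcases mem_closure_iff.mp hb2 U hU hbU with ⟨w, hwU, hw⟩
    exact hyU (by rwa [Set.mem_singleton_iff.mp hw] at hwU)
  -- the retraction
  let f : X → {z : X // z ≠ x} := fun z => if h : z = x then ⟨y, hyx⟩ else ⟨z, h⟩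
  have hfv : ∀ z : X, (f z : X) = if z = x then y else z := by
    intro z
    by_cases h : z = x <;> simp [f, h]
  have hfc : Continuous f := by
    rw [continuous_def]
    intro V hV
    obtain ⟨U, hU, rfl⟩ := isOpen_induced_iff.mp hV
    by_cases hyU : y ∈ U
    · have : f ⁻¹' (Subtype.val ⁻¹' U) = U := by
        ext z
        by_cases h : z = x
        · subst h
          simp only [Set.mem_preimage, hfv, if_pos rfl]
          exact ⟨fun _ => hkey U hU hyU, fun _ => hyU⟩
        · simp [Set.mem_preimage, hfv, h]
      rw [this]; exact hU
    · have : f ⁻¹' (Subtype.val ⁻¹' U) = U \ {x} := by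
        ext z
        by_cases h : z = x
        · subst h
          simp [Set.mem_preimage, hfv, hyU]
        · simp [Set.mem_preimage, hfv, h]
      rw [this]; exact hUminus U hU hyU
  -- the homotopy from id to ι ∘ r
  let g : X → X := fun z => (f z : X)
  have hgc : Continuous g := continuous_subtype_val.comp hfc
  have hgU : ∀ U : Set X, IsOpen U → g ⁻¹' U ⊆ U := by
    intro U hU z hz
    by_cases h : z = x
    · subst h
      have : y ∈ U := by simpa [g, hfv] using hz
      exact hkey U hU this
    · simpa [g, hfv, h] using hz
  let H : unitInterval × X → X := fun p => if p.1 = 1 then g p.2 else p.2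
  have hHc : Continuous H := by
    rw [continuous_def]
    intro U hU
    have : H ⁻¹' U = (({1}ᶜ : Set unitInterval) ×ˢ U) ∪
        ((Set.univ : Set unitInterval) ×ˢ (g ⁻¹' U)) := by
      ext ⟨t, z⟩
      by_cases ht : t = 1
      · subst ht
        simp [H, Set.mem_prod]
      · simp only [H, if_neg ht, Set.mem_preimage, Set.mem_union, Set.mem_prod,
          Set.mem_compl_iff, Set.mem_singleton_iff, ht, not_false_iff, true_and,
          Set.mem_univ]
        exact ⟨fun h => Or.inl h, fun h => h.elim id (fun h2 => hgU U hU h2)⟩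
    rw [this]
    exact ((isClosed_singleton.isOpen_compl).prod hU).union (isOpen_univ.prod (hgc.isOpen_preimage U hU))
  refine ⟨⟨f, hfc⟩, fun z => Subtype.ext (by simp [f, dif_neg z.2]), ?_⟩
  refine ContinuousMap.Homotopic.symm ⟨⟨⟨H, hHc⟩, ?_, ?_⟩⟩
  · intro z
    simp only [H, ContinuousMap.coe_mk, ContinuousMap.id_apply]
    rw [if_neg]
    exact fun h => (one_ne_zero (α := ℝ)) (congrArg Subtype.val h.symm)
  · intro z
    simp [H, g, ContinuousMap.comp_apply]
end

section
/- Let X be a finite T₀ topological space and let x ∈ X be an up beat point, i.e., suppose there exists y ∈ X with y ≠ x such that {z ∈ X | x ∈ closure {z} and z ≠ x} = {z ∈ X | y ∈ closure {z}}. Then the subspace X \ {x} (with the subspace topology) is a deformation retract of X: there is a continuous retraction r : X → X \ {x} with r restricted to X \ {x} equal to the identity and with the composite of r with the inclusion ι : X \ {x} → X homotopic to the identity of X. In particular, the inclusion ι is a homotopy equivalence. -/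
open scoped Topology

/-- Removing an up beat point from a finite T₀ space yields a deformation retract;
in particular the inclusion is a homotopy equivalence. -/
theorem stmt_5 (X : Type*) [TopologicalSpace X] [Finite X] [T0Space X]
    (x y : X) (hyx : y ≠ x)
    (hbeat : {z : X | x ∈ closure {z} ∧ z ≠ x} = {z : X | y ∈ closure {z}}) :
    ∃ r : C(X, {z : X // z ≠ x}),
      (∀ z : {z : X // z ≠ x}, r z = z) ∧
      (ContinuousMap.Homotopic
        ((⟨Subtype.val, continuous_subtype_val⟩ : C({z : X // z ≠ x}, X)).comp r)
        (ContinuousMap.id X)) := by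
  classical
  have hxy : x ∈ closure ({y} : Set X) := by
    have hy : y ∈ {z : X | y ∈ closure {z}} := subset_closure rfl
    rw [← hbeat] at hy
    exact hy.1
  have key : ∀ U : Set X, IsOpen U → x ∈ U → y ∈ U := by
    intro U hU hxU
    rcases mem_closure_iff.mp hxy U hU hxU with ⟨w, hwU, hw⟩
    rwa [Set.mem_singleton_iff.mp hw] at hwU
  set g : X → X := fun z => if z = x then y else z with hg
  have hgne : ∀ z, g z ≠ x := by
    intro z
    by_cases h : z = x <;> simp [hg, h, hyx]
  have hmono : ∀ U : Set X, IsOpen U → ∀ z, z ∈ U → g z ∈ U := by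
    intro U hU z hz
    by_cases h : z = x
    · simpa [hg, h] using key U hU (h ▸ hz)
    · simpa [hg, h] using hz
  -- minimal open neighborhood of x
  set Ux : Set X := ⋂₀ {V : Set X | IsOpen V ∧ x ∈ V} with hUxdef
  have hUxOpen : IsOpen Ux := Set.Finite.isOpen_sInter (Set.toFinite _) (fun V hV => hV.1)
  have hxUx : x ∈ Ux := fun V hV => hV.2
  have hUxsub : ∀ U : Set X, IsOpen U → y ∈ U → Ux ⊆ U ∪ {x} := by
    intro U hU hyU z hz
    by_cases hzx : z = x
    · right; exact hzx
    · left
      have hxcz : x ∈ closure ({z} : Set X) := by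
        rw [mem_closure_iff]
        intro o ho hxo
        exact ⟨z, hz o ⟨ho, hxo⟩, rfl⟩
      have hycz : z ∈ {z : X | y ∈ closure {z}} := by
        rw [← hbeat]; exact ⟨hxcz, hzx⟩
      rcases mem_closure_iff.mp hycz U hU hyU with ⟨w, hwU, hw⟩
      rwa [Set.mem_singleton_iff.mp hw] at hwU
  have hgcont : Continuous g := by
    rw [continuous_def]
    intro U hU
    by_cases hyU : y ∈ U
    · have hpre : g ⁻¹' U = U ∪ Ux := by
        ext z
        by_cases hzx : z = x
        · subst hzx
          simp only [hg, Set.mem_preimage, if_pos rfl, Set.mem_union]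
          exact ⟨fun _ => Or.inr hxUx, fun _ => hyU⟩
        · simp only [hg, Set.mem_preimage, if_neg hzx, Set.mem_union]
          constructor
          · exact fun h => Or.inl h
          · rintro (h | h)
            · exact h
            · rcases hUxsub U hU hyU h with h' | h'
              · exact h'
              · exact absurd h' hzx
      rw [hpre]
      exact hU.union hUxOpen
    · have hxU : x ∉ U := fun h => hyU (key U hU h)
      have hpre : g ⁻¹' U = U := by
        ext z
        by_cases hzx : z = x
        · subst hzx
          simp [hg, hyU, hxU]
        · simp [hg, hzx]
      rw [hpre]
      exact hU
  refine ⟨⟨fun z => ⟨g z, hgne z⟩, hgcont.subtype_mk _⟩, ?_, ?_⟩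
  · intro z
    exact Subtype.ext (by simp [hg, z.2])
  · refine ⟨⟨⟨fun p => if p.1 = 1 then p.2 else g p.2, ?_⟩, ?_, ?_⟩⟩
    · rw [continuous_def]
      intro U hU
      have hpre : (fun p : unitInterval × X => if p.1 = 1 then p.2 else g p.2) ⁻¹' U
          = ({t : unitInterval | t ≠ 1} ×ˢ (g ⁻¹' U)) ∪ (Set.univ ×ˢ U) := by
        ext ⟨t, z⟩
        by_cases ht : t = 1
        · simp [ht]
        · simp only [Set.mem_preimage, if_neg ht, Set.mem_union, Set.mem_prod,
            Set.mem_setOf_eq, Set.mem_univ, true_and]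
          constructor
          · exact fun h => Or.inl ⟨ht, h⟩
          · rintro (⟨_, h⟩ | h)
            · exact h
            · exact hmono U hU z h
      rw [hpre]
      exact ((isOpen_compl_singleton.preimage continuous_id).prod (hgcont.isOpen_preimage U hU)).union
        (isOpen_univ.prod hU)
    · intro z
      simp [ContinuousMap.comp]
    · intro z
      simp
end

section
/- Let X be a nonempty finite topological space containing a point x₀ such that x₀ ∈ closure {y} for every y ∈ X (i.e., x₀ is the least element of X with respect to the specialization preorder). Then X is contractible, i.e., the identity map of X is homotopic to the constant map with value x₀. -/
/-- A finite topological space with a least element for the specialization preorder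
is contractible: the identity is homotopic to the constant map at that point. -/
theorem stmt_6 (X : Type*) [TopologicalSpace X] [Finite X]
    (x₀ : X) (hx₀ : ∀ y : X, x₀ ∈ closure {y}) :
    ContinuousMap.Homotopic (ContinuousMap.id X) (ContinuousMap.const X x₀) := by
  refine ⟨{
    toFun := fun p => if p.1 = (1 : unitInterval) then x₀ else p.2
    continuous_toFun := ?_
    map_zero_left := fun x => by
      simp [show (0 : unitInterval) ≠ 1 from fun h => zero_ne_one (congrArg Subtype.val h)]
    map_one_left := fun x => by simp }⟩
  rw [continuous_def]
  intro U hU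
  by_cases h : x₀ ∈ U
  · have hUuniv : U = Set.univ := by
      ext y
      simp only [Set.mem_univ, iff_true]
      have := hx₀ y
      rw [mem_closure_iff] at this
      obtain ⟨z, hz1, hz2⟩ := this U hU h
      rwa [Set.mem_singleton_iff.mp hz2] at hz1
    simp [hUuniv]
  · have hpre : (fun p : unitInterval × X => if p.1 = (1 : unitInterval) then x₀ else p.2) ⁻¹' U
        = ({(1 : unitInterval)}ᶜ ×ˢ U) := by
      ext p
      by_cases hp : p.1 = 1 <;> simp [hp, h]
    rw [hpre]
    exact (isClosed_singleton.isOpen_compl).prod hU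
end

section
/- Let X be a nonempty finite topological space containing a point x₀ whose closure is all of X, i.e., closure {x₀} = X (equivalently, x₀ is the greatest element of X with respect to the specialization preorder). Then X is contractible, i.e., the identity map of X is homotopic to the constant map with value x₀. -/
/-- A finite topological space with a greatest element for the specialization preorder
(a point whose closure is everything) is contractible. -/
theorem stmt_7 (X : Type*) [TopologicalSpace X] [Finite X]
    (x₀ : X) (hx₀ : closure {x₀} = Set.univ) :
    ContinuousMap.Homotopic (ContinuousMap.id X) (ContinuousMap.const X x₀) := by
  -- x₀ belongs to every nonempty open set
  have hdense : ∀ U : Set X, IsOpen U → U.Nonempty → x₀ ∈ U := by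
    rintro U hU ⟨x, hx⟩
    have hxc : x ∈ closure ({x₀} : Set X) := by rw [hx₀]; trivial
    rcases mem_closure_iff.mp hxc U hU hx with ⟨y, hyU, hy⟩
    rwa [Set.mem_singleton_iff.mp hy] at hyU
  -- The homotopy: H(t,x) = x if t = 0, else x₀
  have hcont : Continuous (fun p : unitInterval × X => if p.1 = 0 then p.2 else x₀) := by
    rw [continuous_def]
    intro U hU
    by_cases hx₀U : x₀ ∈ U
    · have : (fun p : unitInterval × X => if p.1 = 0 then p.2 else x₀) ⁻¹' U =
        (({0}ᶜ : Set unitInterval) ×ˢ (Set.univ : Set X)) ∪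
          ((Set.univ : Set unitInterval) ×ˢ U) := by
        ext ⟨t, x⟩
        by_cases ht : t = 0 <;> simp [ht, hx₀U]
      rw [this]
      exact ((isClosed_singleton.isOpen_compl).prod isOpen_univ).union
        (isOpen_univ.prod hU)
    · have hUe : U = ∅ := by
        by_contra h
        exact hx₀U (hdense U hU (Set.nonempty_iff_ne_empty.mpr h))
      have : (fun p : unitInterval × X => if p.1 = 0 then p.2 else x₀) ⁻¹' U = ∅ := by
        rw [hUe]; simp
      rw [this]; exact isOpen_empty
  exact ⟨{
    toFun := fun p => if p.1 = 0 then p.2 else x₀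
    continuous_toFun := hcont
    map_zero_left := fun x => by simp
    map_one_left := fun x => by norm_num [show (1 : unitInterval) ≠ 0 by norm_num [unitInterval]] }⟩
end

section
/- Let X be a finite topological space, Y an arbitrary topological space, and f, g : Y → X continuous maps such that f(y) ∈ closure {g(y)} for every y ∈ Y (i.e., f ≤ g pointwise in the specialization preorder of X). Then f and g are homotopic. -/
/-- Two continuous maps into a finite topological space that are pointwise comparable
in the specialization preorder are homotopic. -/
theorem stmt_8 (X : Type*) [TopologicalSpace X] [Finite X]
    (Y : Type*) [TopologicalSpace Y]
    (f g : C(Y, X)) (hfg : ∀ y : Y, f y ∈ closure {g y}) :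
    f.Homotopic g := by
  classical
  have hsub : ∀ (U : Set X), IsOpen U → ∀ y, f y ∈ U → g y ∈ U := by
    intro U hU y hy
    have h := hfg y
    rw [mem_closure_iff] at h
    obtain ⟨z, hz, rfl⟩ := h U hU hy
    exact hz
  have hcont : Continuous fun p : unitInterval × Y =>
      if p.1 = 0 then f p.2 else g p.2 := by
    rw [continuous_def]
    intro U hU
    have key : (fun p : unitInterval × Y => if p.1 = 0 then f p.2 else g p.2) ⁻¹' U
        = Set.univ ×ˢ (f ⁻¹' U) ∪ {t : unitInterval | t ≠ 0} ×ˢ (g ⁻¹' U) := by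
      ext ⟨t, y⟩
      by_cases ht : t = 0
      · subst ht
        simp
      · simp only [Set.mem_preimage, if_neg ht, Set.mem_union, Set.mem_prod, Set.mem_univ,
          Set.mem_setOf_eq, true_and, ne_eq, ht, not_false_eq_true]
        constructor
        · intro h; exact Or.inr h
        · rintro (h | h)
          · exact hsub U hU y h
          · exact h
    rw [key]
    exact (isOpen_univ.prod (hU.preimage f.continuous)).union
      (((isClosed_singleton (x := (0 : unitInterval))).isOpen_compl).prod
        (hU.preimage g.continuous))
  exact ⟨⟨⟨fun p => if p.1 = 0 then f p.2 else g p.2, hcont⟩,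
    fun y => by simp, fun y => by simp [(one_ne_zero : (1 : unitInterval) ≠ 0)]⟩⟩
end
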